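/- Let A be the bounded multiplication operator (Af)(x) = e^{−x²}f(x) on L²(ℝ) and B the unbounded multiplication operator (Bf)(x) = e^{x²}f(x) with domain D(B) = {f ∈ L²(ℝ) : e^{x²}f ∈ L²(ℝ)}. Then: A is bounded and self-adjoint; B is self-adjoint (hence closed); BA equals the identity operator on L²(ℝ) (hence BA is normal); AB is the restriction of the identity to D(B), hence AB is not closed and therefore not normal; and A*AB ⊂ BA*A. -/

import Mathlib

noncomputable section

variable {H : Type*} [NormedAddCommGroup H] [InnerProductSpace ℂ H] [CompleteSpace H]

namespace LinearPMap

/-- The composition `S ∘ T` of two partially defined linear operators, with its natural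
domain `{x ∈ D(T) : T x ∈ D(S)}`. -/
noncomputable def pcomp (S T : H →ₗ.[ℂ] H) : H →ₗ.[ℂ] H :=
  { domain := (S.domain.comap T.toFun).map T.domain.subtype
    toFun := (S.toFun.comp ((T.toFun.comp (S.domain.comap T.toFun).subtype).codRestrict
        S.domain fun x => x.2)).comp
      (Submodule.equivMapOfInjective T.domain.subtype Subtype.val_injective
        (S.domain.comap T.toFun)).symm.toLinearMap }

/-- A bounded operator viewed as a partially defined operator with domain the
whole space. -/
noncomputable def ofCLM (A : H →L[ℂ] H) : H →ₗ.[ℂ] H :=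
  A.toLinearMap.toPMap ⊤

/-- An unbounded densely defined operator is *normal* if it is closed and
`N N* = N* N` (including equality of the natural domains). -/
def IsNormalPMap (N : H →ₗ.[ℂ] H) : Prop :=
  Dense (N.domain : Set H) ∧ N.IsClosed ∧ N.pcomp N.adjoint = N.adjoint.pcomp N

end LinearPMap

open MeasureTheory LinearPMap ContinuousLinearMap

local notation "L2R" => Lp ℂ 2 (volume : Measure ℝ)

/-- A bounded operator `T` is *normal* if `T T* = T* T`. -/
def IsNormalOp (T : H →L[ℂ] H) : Prop :=
  T * ContinuousLinearMap.adjoint T = ContinuousLinearMap.adjoint T * T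

/-!
`A` is a two-sided inverse of `B`: `B A = 1` on `L²(ℝ)` and `A B = 1` on `D(B)`. The rest is
abstract operator theory. The range of `A` lies in `D(B)` and is dense, because `A` is
self-adjoint and injective. `B` is symmetric and onto, hence self-adjoint: if `B* y = B x`, then
`y - x` is orthogonal to the range of `B`, which is everything. `A B` is the identity on the dense
proper subspace `D(B)`, so its graph, the diagonal over `D(B)`, is not closed. Finally
`A* A = A²`, and both `A² B` and `B A²` act as `A`.
-/

open scoped InnerProductSpace

section Adjoint

variable {𝕜 E : Type*} [RCLike 𝕜] [NormedAddCommGroup E] [InnerProductSpace 𝕜 E]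
  [CompleteSpace E]

theorem LinearPMap.isSelfAdjoint_of_isFormalAdjoint_of_surjective {T : E →ₗ.[𝕜] E}
    (hT : Dense (T.domain : Set E)) (hsymm : T.IsFormalAdjoint T) (hsurj : Function.Surjective T) :
    IsSelfAdjoint T := by
  have hle : T ≤ T.adjoint := hsymm.le_adjoint hT
  refine (eq_of_le_of_domain_eq hle (le_antisymm hle.1 fun y hy => ?_)).symm
  obtain ⟨x, hx⟩ := hsurj (T.adjoint ⟨y, hy⟩)
  obtain ⟨z, hz⟩ := hsurj (y - x)
  have horth : ⟪y - (x : E), T z⟫_𝕜 = 0 := by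
    rw [inner_sub_left, ← adjoint_isFormalAdjoint hT ⟨y, hy⟩ z, ← hx, hsymm, sub_self]
  rw [hz, inner_self_eq_zero, sub_eq_zero] at horth
  exact horth ▸ x.2

theorem LinearPMap.dense_domain_of_rightInverse {S : E →ₗ.[𝕜] E} {A : E →L[𝕜] E}
    (hA : IsSelfAdjoint A) (hright : ∀ x, ∃ hx : A x ∈ S.domain, S ⟨A x, hx⟩ = x) :
    Dense (S.domain : Set E) := by
  have hinj : Function.Injective A := fun x y hxy =>
    (hright x).2.symm.trans ((congrArg S (Subtype.ext hxy)).trans (hright y).2)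
  have hrange : Dense (LinearMap.range (A : E →ₗ[𝕜] E) : Set E) := by
    rw [Submodule.dense_iff_topologicalClosure_eq_top, Submodule.topologicalClosure_eq_top_iff,
      ContinuousLinearMap.orthogonal_range, hA.adjoint_eq]
    exact LinearMap.ker_eq_bot_of_injective hinj
  refine hrange.mono ?_
  rintro _ ⟨x, rfl⟩
  exact (hright x).1

end Adjoint

namespace LinearPMap

section Composition

omit [CompleteSpace H]

theorem mem_pcomp_domain {S T : H →ₗ.[ℂ] H} {x : H} :
    x ∈ (S.pcomp T).domain ↔ ∃ hx : x ∈ T.domain, T ⟨x, hx⟩ ∈ S.domain := by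
  constructor
  · rintro ⟨y, hmem, rfl⟩
    exact ⟨y.2, hmem⟩
  · rintro ⟨hx, hmem⟩
    exact ⟨⟨x, hx⟩, hmem, rfl⟩

theorem pcomp_apply (S T : H →ₗ.[ℂ] H) (x : (S.pcomp T).domain)
    (hx : (x : H) ∈ T.domain) (hTx : T ⟨x, hx⟩ ∈ S.domain) :
    S.pcomp T x = S ⟨T ⟨x, hx⟩, hTx⟩ := by
  have hpre : ((Submodule.equivMapOfInjective T.domain.subtype Subtype.val_injective
      (S.domain.comap T.toFun)).symm x : T.domain) = ⟨x, hx⟩ :=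
    Subtype.ext (Submodule.map_equivMapOfInjective_symm_apply _ _ _ x)
  change S.toFun ⟨T.toFun _, _⟩ = _
  congr 1
  exact Subtype.ext (congrArg T.toFun hpre)

theorem domain_ofCLM_pcomp (A : H →L[ℂ] H) (T : H →ₗ.[ℂ] H) :
    ((ofCLM A).pcomp T).domain = T.domain := by
  ext x
  simp only [mem_pcomp_domain]
  exact ⟨fun ⟨hx, _⟩ => hx, fun hx => ⟨hx, Submodule.mem_top⟩⟩

theorem ofCLM_pcomp_apply (A : H →L[ℂ] H) (T : H →ₗ.[ℂ] H)
    (x : ((ofCLM A).pcomp T).domain) :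
    (ofCLM A).pcomp T x = A (T ⟨x, domain_ofCLM_pcomp A T ▸ x.2⟩) :=
  pcomp_apply _ _ x _ Submodule.mem_top

theorem pcomp_ofCLM_apply {S : H →ₗ.[ℂ] H} {A : H →L[ℂ] H}
    (x : (S.pcomp (ofCLM A)).domain) (hx : A x ∈ S.domain) :
    S.pcomp (ofCLM A) x = S ⟨A x, hx⟩ :=
  pcomp_apply _ _ x Submodule.mem_top hx

theorem pcomp_ofCLM_eq_id {S : H →ₗ.[ℂ] H} {A : H →L[ℂ] H}
    (hright : ∀ x, ∃ hx : A x ∈ S.domain, S ⟨A x, hx⟩ = x) :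
    S.pcomp (ofCLM A) = (LinearMap.id : H →ₗ[ℂ] H).toPMap ⊤ := by
  refine ext (eq_top_iff.2 fun x _ => mem_pcomp_domain.2 ⟨Submodule.mem_top, (hright x).1⟩) ?_
  intro x hx _
  exact (pcomp_ofCLM_apply ⟨x, hx⟩ (hright x).1).trans (hright x).2

theorem ofCLM_pcomp_le_id {S : H →ₗ.[ℂ] H} {A : H →L[ℂ] H}
    (hleft : ∀ x : S.domain, A (S x) = x) :
    (ofCLM A).pcomp S ≤ (LinearMap.id : H →ₗ[ℂ] H).toPMap ⊤ := by
  refine ⟨le_top, fun x y hxy => ?_⟩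
  rw [ofCLM_pcomp_apply, hleft]
  exact hxy

theorem ofCLM_mul_self_pcomp_le {S : H →ₗ.[ℂ] H} {A : H →L[ℂ] H}
    (hright : ∀ x, ∃ hx : A x ∈ S.domain, S ⟨A x, hx⟩ = x)
    (hleft : ∀ x : S.domain, A (S x) = x) :
    (ofCLM (A * A)).pcomp S ≤ S.pcomp (ofCLM (A * A)) := by
  refine ⟨fun x _ => mem_pcomp_domain.2 ⟨Submodule.mem_top, (hright (A x)).1⟩,
    fun x y hxy => ?_⟩
  rw [ofCLM_pcomp_apply, pcomp_ofCLM_apply y (hright (A y)).1]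
  simp only [mul_apply_eq_comp, hleft, (hright _).2, ← hxy]

theorem isClosed_domain_of_le_id {S : H →ₗ.[ℂ] H}
    (hS : S ≤ (LinearMap.id : H →ₗ[ℂ] H).toPMap ⊤) (hclosed : S.IsClosed) :
    _root_.IsClosed (S.domain : Set H) := by
  have hdomain : (S.domain : Set H) = (fun x => (x, x)) ⁻¹' (S.graph : Set (H × H)) := by
    ext x
    refine ⟨fun hx => ?_, fun hx => mem_domain_iff.2 ⟨x, hx⟩⟩
    have hSx : S ⟨x, hx⟩ = x := hS.2 (y := ⟨x, Submodule.mem_top⟩) rfl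
    change (x, x) ∈ S.graph
    simpa only [hSx] using S.mem_graph ⟨x, hx⟩
  rw [hdomain]
  exact hclosed.preimage (continuous_id.prodMk continuous_id)

theorem not_isClosed_of_le_id {S : H →ₗ.[ℂ] H}
    (hS : S ≤ (LinearMap.id : H →ₗ[ℂ] H).toPMap ⊤) (hdense : Dense (S.domain : Set H))
    (hne : S.domain ≠ ⊤) : ¬S.IsClosed := fun hclosed =>
  hne (SetLike.coe_injective ((isClosed_domain_of_le_id hS hclosed).closure_eq.symm.trans
    hdense.closure_eq))

end Composition

theorem isNormalPMap_id : IsNormalPMap ((LinearMap.id : H →ₗ[ℂ] H).toPMap ⊤) := by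
  have hdense : Dense ((⊤ : Submodule ℂ H) : Set H) := by simp
  have hadj : ((LinearMap.id : H →ₗ[ℂ] H).toPMap ⊤).adjoint =
      (LinearMap.id : H →ₗ[ℂ] H).toPMap ⊤ :=
    (ContinuousLinearMap.id ℂ H).toPMap_adjoint_eq_adjoint_toPMap_of_dense hdense |>.trans
      (by rw [← ContinuousLinearMap.one_def, ContinuousLinearMap.adjoint_one]; rfl)
  exact ⟨hdense, hadj ▸ adjoint_isClosed hdense, by rw [hadj]⟩

end LinearPMap

theorem MeasureTheory.Lp.inner_eq_of_ae_eq_ofReal_mul {α : Type*} [MeasurableSpace α]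
    {μ : Measure α} {φ : α → ℝ} {f g f' g' : Lp ℂ 2 μ}
    (hf : f' =ᵐ[μ] fun x => (φ x : ℂ) * f x) (hg : g' =ᵐ[μ] fun x => (φ x : ℂ) * g x) :
    ⟪f', g⟫_ℂ = ⟪f, g'⟫_ℂ := by
  rw [L2.inner_def, L2.inner_def]
  refine integral_congr_ae ?_
  filter_upwards [hf, hg] with x hfx hgx
  simp only [hfx, hgx, RCLike.inner_apply, map_mul, Complex.conj_ofReal]
  ring

theorem memLp_two_exp_neg_sq : MemLp (fun x : ℝ => (Real.exp (-x ^ 2) : ℂ)) 2 volume := by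
  refine (memLp_two_iff_integrable_sq_norm (by fun_prop)).2 ?_
  refine (integrable_exp_neg_mul_sq two_pos).congr (Filter.Eventually.of_forall fun x => ?_)
  change Real.exp (-2 * x ^ 2) = ‖(Real.exp (-x ^ 2) : ℂ)‖ ^ 2
  rw [Complex.norm_real, Real.norm_of_nonneg (Real.exp_nonneg _), ← Real.exp_nat_mul]
  ring_nf

theorem exp_sq_mul_exp_neg_sq (x : ℝ) : (Real.exp (x ^ 2) : ℂ) * Real.exp (-x ^ 2) = 1 := by
  rw [← Complex.ofReal_mul, ← Real.exp_add, add_neg_cancel, Real.exp_zero, Complex.ofReal_one]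

section GaussianMultipliers

variable {A : L2R →L[ℂ] L2R} {B : L2R →ₗ.[ℂ] L2R}

theorem mulExpNegSq_rightInverse_mulExpSq
    (hA : ∀ f : L2R,
      (A f : ℝ → ℂ) =ᵐ[volume] fun x : ℝ => (Real.exp (-x ^ 2) : ℂ) * f x)
    (hBdom : ∀ f : L2R, f ∈ B.domain ↔
      MemLp (fun x : ℝ => (Real.exp (x ^ 2) : ℂ) * f x) 2 volume)
    (hB : ∀ f : B.domain,
      (B f : ℝ → ℂ) =ᵐ[volume] fun x : ℝ => (Real.exp (x ^ 2) : ℂ) * (f : L2R) x)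
    (f : L2R) : ∃ hf : A f ∈ B.domain, B ⟨A f, hf⟩ = f := by
  have hBAf : (fun x : ℝ => (Real.exp (x ^ 2) : ℂ) * A f x) =ᵐ[volume] f := by
    filter_upwards [hA f] with x hx
    rw [hx, ← mul_assoc, exp_sq_mul_exp_neg_sq, one_mul]
  have hmem : A f ∈ B.domain := (hBdom _).2 ((memLp_congr_ae hBAf).2 (Lp.memLp f))
  exact ⟨hmem, Lp.ext ((hB ⟨A f, hmem⟩).trans hBAf)⟩

theorem mulExpNegSq_leftInverse_mulExpSq
    (hA : ∀ f : L2R,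
      (A f : ℝ → ℂ) =ᵐ[volume] fun x : ℝ => (Real.exp (-x ^ 2) : ℂ) * f x)
    (hB : ∀ f : B.domain,
      (B f : ℝ → ℂ) =ᵐ[volume] fun x : ℝ => (Real.exp (x ^ 2) : ℂ) * (f : L2R) x)
    (f : B.domain) : A (B f) = f := by
  refine Lp.ext ?_
  filter_upwards [hA (B f), hB f] with x hAx hBx
  rw [hAx, hBx, ← mul_assoc, mul_comm (Real.exp (-x ^ 2) : ℂ), exp_sq_mul_exp_neg_sq, one_mul]

theorem mulExpSq_domain_ne_top
    (hBdom : ∀ f : L2R, f ∈ B.domain ↔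
      MemLp (fun x : ℝ => (Real.exp (x ^ 2) : ℂ) * f x) 2 volume) :
    B.domain ≠ ⊤ := by
  intro htop
  have hgauss := (hBdom (memLp_two_exp_neg_sq.toLp _)).1 (htop ▸ Submodule.mem_top)
  have hone : (fun x : ℝ => (Real.exp (x ^ 2) : ℂ) * memLp_two_exp_neg_sq.toLp _ x)
      =ᵐ[volume] fun _ => (1 : ℂ) := by
    filter_upwards [memLp_two_exp_neg_sq.coeFn_toLp] with x hx
    rw [hx, exp_sq_mul_exp_neg_sq]
  simpa [memLp_const_iff] using (memLp_congr_ae hone).1 hgauss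

end GaussianMultipliers

/-- For the multiplication operators `(A f)(x) = e^{-x²} f(x)` (bounded) and
`(B f)(x) = e^{x²} f(x)` (unbounded, on its natural domain) on `L²(ℝ)`: `A` is
self-adjoint, `B` is self-adjoint (hence closed), `BA` is the identity on `L²(ℝ)`
(hence normal), `AB` is the restriction of the identity to `D(B)`, hence not closed
and therefore not normal, and `A* A B ⊂ B A* A`. -/
theorem kaplansky_counterexample
    (A : L2R →L[ℂ] L2R)
    (hA : ∀ f : L2R, (A f : ℝ → ℂ) =ᵐ[volume] fun x : ℝ => (Real.exp (-x ^ 2) : ℂ) * f x)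
    (B : L2R →ₗ.[ℂ] L2R)
    (hBdom : ∀ f : L2R, f ∈ B.domain ↔
      MemLp (fun x : ℝ => (Real.exp (x ^ 2) : ℂ) * f x) 2 volume)
    (hB : ∀ f : B.domain,
      (B f : ℝ → ℂ) =ᵐ[volume] fun x : ℝ => (Real.exp (x ^ 2) : ℂ) * (f : L2R) x) :
    IsSelfAdjoint A ∧
    B.adjoint = B ∧ B.IsClosed ∧
    B.pcomp (ofCLM A) = (LinearMap.id : L2R →ₗ[ℂ] L2R).toPMap ⊤ ∧
    IsNormalPMap (B.pcomp (ofCLM A)) ∧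
    (ofCLM A).pcomp B ≤ (LinearMap.id : L2R →ₗ[ℂ] L2R).toPMap ⊤ ∧
    ((ofCLM A).pcomp B).domain = B.domain ∧
    ¬((ofCLM A).pcomp B).IsClosed ∧
    ¬IsNormalPMap ((ofCLM A).pcomp B) ∧
    (ofCLM (ContinuousLinearMap.adjoint A * A)).pcomp B ≤
      B.pcomp (ofCLM (ContinuousLinearMap.adjoint A * A)) := by
  have hAsa : IsSelfAdjoint A := ContinuousLinearMap.isSelfAdjoint_iff_isSymmetric.2
    fun f g => Lp.inner_eq_of_ae_eq_ofReal_mul (hA f) (hA g)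
  have hright := mulExpNegSq_rightInverse_mulExpSq hA hBdom hB
  have hleft := mulExpNegSq_leftInverse_mulExpSq hA hB
  have hdense := dense_domain_of_rightInverse hAsa hright
  have hBsa : B.adjoint = B := isSelfAdjoint_of_isFormalAdjoint_of_surjective hdense
    (fun f g => Lp.inner_eq_of_ae_eq_ofReal_mul (hB f) (hB g)) fun f => ⟨_, (hright f).2⟩
  have hBA := pcomp_ofCLM_eq_id hright
  have hABle := ofCLM_pcomp_le_id hleft
  have hABdom := domain_ofCLM_pcomp A B
  have hABnotClosed : ¬((ofCLM A).pcomp B).IsClosed :=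
    not_isClosed_of_le_id hABle (hABdom ▸ hdense) (hABdom ▸ mulExpSq_domain_ne_top hBdom)
  refine ⟨hAsa, hBsa, hBsa ▸ adjoint_isClosed hdense, hBA, hBA ▸ isNormalPMap_id, hABle,
    hABdom, hABnotClosed, fun hnormal => hABnotClosed hnormal.2.1, ?_⟩
  rw [hAsa.adjoint_eq]
  exact ofCLM_mul_self_pcomp_le hright hleft
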